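/- arXiv:1204.4691 — 4 statements merged into one kernel-verified Lean document; each statement's English description precedes it below -/
import Mathlib

section
/- Let a and a' be strings that are both presuffixes of a common string z, with |a| < |a'| ≤ |z|. Then a is a presuffix of a'. -/
theorem stmt5_general (z a a' : List Bool)
    (ha : a <+: z ∧ a <:+ z) (ha' : a' <+: z ∧ a' <:+ z)
    (h : a.length < a'.length) :
    a <+: a' ∧ a <:+ a' :=
  ⟨List.prefix_of_prefix_length_le ha.1 ha'.1 h.le,
    List.suffix_of_suffix_length_le ha.2 ha'.2 h.le⟩

theorem stmt5 (z a a' : List Bool)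
    (ha : a <+: z ∧ a <:+ z) (ha' : a' <+: z ∧ a' <:+ z)
    (h : a.length < a'.length) (h2 : a'.length ≤ z.length) :
    a <+: a' ∧ a <:+ a' :=
  stmt5_general z a a' ha ha' h
end

section
/- Suppose a and a' are strings with a a presuffix of a' and |a'| > |a|, and let t be the periodic string (shortest period-word) of a. Then |a'| ≥ |a| + |t|. -/
/-!
Write `a' = a ++ y = y' ++ a`. Reading the second equation at index `i + |y'|` shows that `a'`
has period `|y'| = |a'| - |a|`, with period word `y'`; so does its prefix `a`. Minimality of `t`
then gives `|t| ≤ |y'|`.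
-/

def isPeriodWordOf (t a : List Bool) : Prop :=
  t ≠ [] ∧ ∀ i < a.length, a[i]? = t[i % t.length]?

def isPeriodicStringOf (t a : List Bool) : Prop :=
  isPeriodWordOf t a ∧ ∀ t', isPeriodWordOf t' a → t.length ≤ t'.length

theorem List.getElem?_append_eq_getElem?_mod_of_append_eq {α : Type*} {u v w : List α}
    (h : u ++ v = v ++ w) (hu : u ≠ []) (i : ℕ) (hi : i < (u ++ v).length) :
    (u ++ v)[i]? = u[i % u.length]? := by
  induction i using Nat.strong_induction_on with
  | _ i ih =>
    rcases lt_or_ge i u.length with hlt | hge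
    · rw [List.getElem?_append_left hlt, Nat.mod_eq_of_lt hlt]
    · have hsub : i - u.length < (u ++ v).length := by omega
      have hv : i - u.length < v.length := by simp only [List.length_append] at hi; omega
      have hpos : 0 < u.length := List.length_pos_iff.2 hu
      calc (u ++ v)[i]? = v[i - u.length]? := List.getElem?_append_right hge
        _ = (u ++ v)[i - u.length]? := by rw [h, List.getElem?_append_left hv]
        _ = u[(i - u.length) % u.length]? := ih _ (by omega) hsub
        _ = u[i % u.length]? := by rw [← Nat.mod_eq_sub_mod hge]

theorem isPeriodWordOf_append_of_append_eq {u v w : List Bool} (h : u ++ v = v ++ w)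
    (hu : u ≠ []) : isPeriodWordOf u (u ++ v) :=
  ⟨hu, List.getElem?_append_eq_getElem?_mod_of_append_eq h hu⟩

theorem isPeriodWordOf.of_prefix {t a a' : List Bool} (ht : isPeriodWordOf t a')
    (h : a <+: a') : isPeriodWordOf t a := by
  refine ⟨ht.1, fun i hi => ?_⟩
  rw [← ht.2 i (lt_of_lt_of_le hi h.length_le), List.getElem?_eq_getElem hi,
    List.prefix_iff_getElem?.1 h i hi]

theorem stmt6 (a a' t : List Bool) (h1 : a <+: a') (h2 : a <:+ a')
    (h3 : a'.length > a.length) (ht : isPeriodicStringOf t a) :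
    a'.length ≥ a.length + t.length := by
  obtain ⟨y', hy'⟩ := h2
  have hlen : a'.length = y'.length + a.length := by rw [← hy', List.length_append]
  have hy'_ne : y' ≠ [] := List.ne_nil_of_length_pos (by omega)
  obtain ⟨y, hy⟩ := h1
  have hper : isPeriodWordOf y' a' :=
    hy' ▸ isPeriodWordOf_append_of_append_eq (hy'.trans hy.symm) hy'_ne
  have := ht.2 y' (hper.of_prefix ⟨y, hy⟩)
  omega
end

section
/- Suppose z' = u t^j a = t^h a w where t, a, u, w are strings, u is nonempty, j is the largest integer such that z' has suffix t^j a, and h is the largest integer such that z' has prefix t^h a. If h > j, then |u| > |t|. -/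
/-- `rep t n` is the `n`-fold concatenation `t^n`. -/
def rep (t : List Bool) (n : ℕ) : List Bool := (List.replicate n t).flatten

/-!
Comparing lengths in `u t^j a = t^h a w` gives `|u| = (h - j)|t| + |w|`, so `|u| > |t|` as soon
as `h > j` and `w` is nonempty. And `w` cannot be empty: otherwise `t^h a` would be a suffix,
against the maximality of `j < h`.
-/

theorem length_rep (t : List Bool) (n : ℕ) : (rep t n).length = n * t.length := by
  simp [rep, List.length_flatten, List.sum_replicate]

theorem length_lt_of_append_rep_eq {t a u w : List Bool} {j h : ℕ}
    (hz : u ++ rep t j ++ a = rep t h ++ a ++ w) (hw : w ≠ []) (hjh : j < h) :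
    t.length < u.length := by
  have hlen := congrArg List.length hz
  simp only [List.length_append, length_rep] at hlen
  have hwpos : 0 < w.length := List.length_pos_iff.mpr hw
  have hmul : (j + 1) * t.length ≤ h * t.length := Nat.mul_le_mul_right _ hjh
  rw [add_one_mul] at hmul
  omega

theorem stmt9_general (z' t a u w : List Bool) (j h : ℕ)
    (h1 : z' = u ++ rep t j ++ a) (h2 : z' = rep t h ++ a ++ w)
    (hjmax : ∀ j', (rep t j' ++ a) <:+ z' → j' ≤ j)
    (hhj : h > j) : u.length > t.length := by
  have hw : w ≠ [] := by
    rintro rfl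
    have hsuffix : (rep t h ++ a) <:+ z' := by
      rw [h2, List.append_nil]
    exact absurd (hjmax h hsuffix) (Nat.not_le.mpr hhj)
  exact length_lt_of_append_rep_eq (h1 ▸ h2) hw hhj

theorem stmt9 (z' t a u w : List Bool) (j h : ℕ)
    (h1 : z' = u ++ rep t j ++ a) (h2 : z' = rep t h ++ a ++ w)
    (hu : u ≠ [])
    (hjmax : ∀ j', (rep t j' ++ a) <:+ z' → j' ≤ j)
    (hhmax : ∀ h', (rep t h' ++ a) <+: z' → h' ≤ h)
    (hhj : h > j) : u.length > t.length :=
  stmt9_general z' t a u w j h h1 h2 hjmax hhj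
end

section
/- Suppose z' = u t^j a = t^j a w where u, w are nonempty, t is the periodic string of a (and a prefix of z'), and j is the largest integer such that z' = y t^j a for some y. Then |u| ≠ |t|; moreover if |u| < |t| then a has a period of length at most |u| < |t|, a contradiction, so |u| > |t|. -/
open List

theorem List.hasPeriod_length_of_append_eq_append {α : Type*} {u s w : List α}
    (h : u ++ s = s ++ w) : s.HasPeriod u.length := by
  rcases le_or_gt u.length s.length with hle | hgt
  · have htake : s.take u.length = u := by
      simpa [take_append_of_le_length hle] using congrArg (take u.length) h.symm
    rw [HasPeriod, htake, h]
    exact prefix_append _ _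
  · exact hasPeriod_of_length_le _ _ hgt.le

theorem isPeriodWordOf_take_of_hasPeriod {a : List Bool} {p : ℕ} (ha : a.HasPeriod p)
    (hp : 0 < p) (hne : a ≠ []) : isPeriodWordOf (a.take p) a := by
  refine ⟨by simp [take_eq_nil_iff, hp.ne', hne], fun i hi => ?_⟩
  set q := (a.take p).length
  have hq : a.HasPeriod q := by
    rcases le_total p a.length with hle | hge
    · simpa [q, min_eq_left hle] using ha
    · exact hasPeriod_of_length_le _ _ (by simp [q, hge])
  have hq0 : 0 < q := by simpa [q] using ⟨hp, length_pos_iff.mpr hne⟩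
  rw [hasPeriod_iff_forall_getElem?_mod.mp hq i hi,
    getElem?_take_of_lt ((Nat.mod_lt i hq0).trans_le (length_take_le _ _))]

theorem isPeriodicStringOf.length_le_of_hasPeriod {t a : List Bool} (ht : isPeriodicStringOf t a)
    {p : ℕ} (ha : a.HasPeriod p) (hp : 0 < p) : t.length ≤ p := by
  rcases eq_or_ne a [] with rfl | hne
  · exact (ht.2 [true] ⟨by simp, by simp⟩).trans hp
  · exact (ht.2 _ (isPeriodWordOf_take_of_hasPeriod ha hp hne)).trans (length_take_le _ _)

theorem rep_succ (t : List Bool) (n : ℕ) : rep t (n + 1) = t ++ rep t n := by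
  simp [rep, replicate_succ]

theorem stmt10_general (z' t a u w : List Bool) (j : ℕ)
    (h1 : z' = u ++ rep t j ++ a) (h2 : z' = rep t j ++ a ++ w)
    (hu : u ≠ [])
    (ht : isPeriodicStringOf t a) (htz : t <+: z')
    (hjmax : ∀ (j' : ℕ) (y : List Bool), z' = y ++ rep t j' ++ a → j' ≤ j) :
    u.length ≠ t.length ∧ u.length > t.length := by
  have hz : u ++ (rep t j ++ a) = rep t j ++ a ++ w := by rw [← append_assoc, ← h1, h2]
  have hper : a.HasPeriod u.length :=
    (hasPeriod_length_of_append_eq_append hz).infix (suffix_append _ _).isInfix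
  have hne : u.length ≠ t.length := by
    intro heq
    have hut : u = t :=
      (prefix_of_prefix_length_le ⟨_, hz.trans h2.symm⟩ htz heq.le).eq_of_length heq
    have := hjmax (j + 1) [] (by rw [h1, hut, rep_succ, nil_append, append_assoc])
    omega
  have hnlt : ¬ u.length < t.length := fun hlt =>
    (ht.length_le_of_hasPeriod hper (length_pos_iff.mpr hu)).not_gt hlt
  exact ⟨hne, by omega⟩

theorem stmt10 (z' t a u w : List Bool) (j : ℕ)
    (h1 : z' = u ++ rep t j ++ a) (h2 : z' = rep t j ++ a ++ w)
    (hu : u ≠ []) (hw : w ≠ [])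
    (ht : isPeriodicStringOf t a) (htz : t <+: z')
    (hjmax : ∀ (j' : ℕ) (y : List Bool), z' = y ++ rep t j' ++ a → j' ≤ j) :
    u.length ≠ t.length ∧ u.length > t.length :=
  stmt10_general z' t a u w j h1 h2 hu ht htz hjmax
end
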